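/- arXiv:1910.12954 — 3 statements merged into one kernel-verified Lean document; each statement's English description precedes it below -/
import Mathlib

section
/- Let H⁰ and H¹ be vectors in ℝⁿ with max_i |H⁰_i − H¹_i| ≤ δ/n, where 0 ≤ δ < 2·ε·n and ε > 0. For b ∈ {0,1} let P_b be the uniform probability measure on the hypercube H(H^b, ε) in ℝⁿ. Then d_TV(P₀, P₁) ≤ 1 − (1 − δ/(2εn))ⁿ. -/
open MeasureTheory Finset

/-- The axis-aligned hypercube of radius `r` centered at `H`, inside `ℝⁿ`. -/
def hypercube {n : ℕ} (H : Fin n → ℝ) (r : ℝ) : Set (Fin n → ℝ) :=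
  {x | ∀ i, |x i - H i| ≤ r}

/-- The uniform probability measure on a set `s`: normalized Lebesgue measure restricted
to `s`. -/
noncomputable def uniformOn {α : Type*} [MeasureSpace α] (s : Set α) : Measure α :=
  (volume s)⁻¹ • volume.restrict s

/-- Total variation distance between two measures: the supremum over measurable sets `A`
of `|P(A) − Q(A)|`. -/
noncomputable def dTV {α : Type*} [MeasurableSpace α] (P Q : Measure α) : ℝ :=
  ⨆ A : {A : Set α // MeasurableSet A}, |(P A.1).toReal - (Q A.1).toReal|

/-- If `max_i |H⁰_i − H¹_i| ≤ δ/n` with `0 ≤ δ < 2 ε n` and `ε > 0`, then the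
total variation distance between the uniform measures on the hypercubes `H(H⁰, ε)` and
`H(H¹, ε)` is at most `1 − (1 − δ/(2 ε n))ⁿ`. -/
theorem stmt4 {n : ℕ} (H₀ H₁ : Fin n → ℝ) (δ ε : ℝ) (hδ : 0 ≤ δ) (hε : 0 < ε)
    (hδε : δ < 2 * ε * n) (hclose : ∀ i, |H₀ i - H₁ i| ≤ δ / n) :
    dTV (uniformOn (hypercube H₀ ε)) (uniformOn (hypercube H₁ ε))
      ≤ 1 - (1 - δ / (2 * ε * n)) ^ n := by
  have hn0 : 0 < n := by
    rcases Nat.eq_zero_or_pos n with h | h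
    · subst h; simp at hδε; linarith
    · exact h
  have hn : 0 < (n : ℝ) := by exact_mod_cast hn0
  have hε2 : 0 < 2 * ε := by linarith
  have hδn : δ / n < 2 * ε := by rw [div_lt_iff₀ hn]; nlinarith
  have hδn0 : 0 ≤ δ / n := div_nonneg hδ hn.le
  set c : ℝ := δ / (2 * ε * n) with hc
  have hc0 : 0 ≤ c := div_nonneg hδ (by positivity)
  have hc1 : c < 1 := (div_lt_one (by positivity)).2 hδε
  have hceq : (2 * ε - δ / n) / (2 * ε) = 1 - c := by
    rw [hc, sub_div, div_self hε2.ne', div_div]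
    ring_nf
  have hbound0 : 0 ≤ 1 - (1 - c) ^ n := by
    have h1 : (1 - c) ^ n ≤ 1 := pow_le_one₀ (by linarith) (by linarith)
    linarith
  -- cube as a pi set
  have hcube : ∀ H : Fin n → ℝ, hypercube H ε =
      Set.pi Set.univ fun i => Set.Icc (H i - ε) (H i + ε) := by
    intro H
    ext x
    simp only [hypercube, Set.mem_setOf_eq, Set.mem_pi, Set.mem_univ, Set.mem_Icc,
      forall_true_left, abs_le]
    constructor <;> intro h i <;> have h' := h i <;> constructor <;>
      linarith [h'.1, h'.2]
  have hKmeas : ∀ H : Fin n → ℝ, MeasurableSet (hypercube H ε) := by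
    intro H; rw [hcube]; exact MeasurableSet.univ_pi fun i => measurableSet_Icc
  set K₀ := hypercube H₀ ε with hK₀def
  set K₁ := hypercube H₁ ε with hK₁def
  set S := K₀ ∩ K₁ with hSdef
  have hSmeas : MeasurableSet S := (hKmeas H₀).inter (hKmeas H₁)
  have hvolK : ∀ H : Fin n → ℝ, volume (hypercube H ε) = ENNReal.ofReal (2 * ε) ^ n := by
    intro H
    rw [hcube, volume_pi_pi]
    have h2 : ∀ i : Fin n, (H i + ε) - (H i - ε) = 2 * ε := by intro i; ring
    simp [Real.volume_Icc, h2]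
  have hvolS : ENNReal.ofReal (2 * ε - δ / n) ^ n ≤ volume S := by
    have hsub : Set.pi Set.univ
        (fun i => Set.Icc (max (H₀ i) (H₁ i) - ε) (min (H₀ i) (H₁ i) + ε)) ⊆ S := by
      intro x hx
      have h := fun i => hx i (Set.mem_univ i)
      refine ⟨fun i => ?_, fun i => ?_⟩ <;>
      · rw [abs_le]
        have h' := h i
        simp only [Set.mem_Icc] at h'
        constructor <;>
          linarith [le_max_left (H₀ i) (H₁ i), le_max_right (H₀ i) (H₁ i),
            min_le_left (H₀ i) (H₁ i), min_le_right (H₀ i) (H₁ i), h'.1, h'.2]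
    refine le_trans ?_ (measure_mono hsub)
    rw [volume_pi_pi]
    have hpow : ENNReal.ofReal (2 * ε - δ / n) ^ n =
        ∏ _i : Fin n, ENNReal.ofReal (2 * ε - δ / n) := by simp
    rw [hpow]
    apply Finset.prod_le_prod'
    intro i _
    rw [Real.volume_Icc]
    apply ENNReal.ofReal_le_ofReal
    have h' := hclose i
    rw [abs_le] at h'
    rcases le_total (H₀ i) (H₁ i) with h | h
    · rw [max_eq_right h, min_eq_left h]; linarith [h'.1, h'.2]
    · rw [max_eq_left h, min_eq_right h]; linarith [h'.1, h'.2]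
  -- finiteness and real values
  have hKtop : ∀ H : Fin n → ℝ, volume (hypercube H ε) ≠ ⊤ := by
    intro H; rw [hvolK]; exact ENNReal.pow_ne_top ENNReal.ofReal_ne_top
  set Vr : ℝ := (2 * ε) ^ n with hVr
  have hVrpos : 0 < Vr := by positivity
  have hVtoReal : ∀ H : Fin n → ℝ, (volume (hypercube H ε)).toReal = Vr := by
    intro H; rw [hvolK, ENNReal.toReal_pow, ENNReal.toReal_ofReal hε2.le]
  set sr : ℝ := (volume S).toReal with hsr
  have hStop : volume S ≠ ⊤ :=
    ne_top_of_le_ne_top (hKtop H₀) (measure_mono Set.inter_subset_left)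
  have hsrge : (2 * ε - δ / n) ^ n ≤ sr := by
    have h := ENNReal.toReal_mono hStop hvolS
    rwa [ENNReal.toReal_pow, ENNReal.toReal_ofReal (by linarith)] at h
  -- split lemma
  have hsplitK : ∀ H : Fin n → ℝ, S ⊆ hypercube H ε →
      volume S + volume (hypercube H ε \ S) = volume (hypercube H ε) := by
    intro H hSK
    have h := measure_inter_add_diff (μ := volume) (hypercube H ε) hSmeas
    rwa [Set.inter_eq_self_of_subset_right hSK] at h
  -- main sup bound
  apply Real.iSup_le _ hbound0
  rintro ⟨A, hA⟩
  have happly : ∀ s : Set (Fin n → ℝ),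
      uniformOn s A = (volume s)⁻¹ * volume (A ∩ s) := by
    intro s
    rw [uniformOn, Measure.smul_apply, smul_eq_mul, Measure.restrict_apply hA]
  have hsplitA : ∀ H : Fin n → ℝ, S ⊆ hypercube H ε →
      volume (A ∩ S) + volume ((A ∩ hypercube H ε) \ S) = volume (A ∩ hypercube H ε) := by
    intro H hSK
    have h := measure_inter_add_diff (μ := volume) (A ∩ hypercube H ε) hSmeas
    rwa [Set.inter_assoc, Set.inter_eq_self_of_subset_right hSK] at h
  -- real abbreviations
  have key : ∀ H : Fin n → ℝ, S ⊆ hypercube H ε →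
      (uniformOn (hypercube H ε) A).toReal
        = ((volume (A ∩ S)).toReal + (volume ((A ∩ hypercube H ε) \ S)).toReal) / Vr ∧
      (volume ((A ∩ hypercube H ε) \ S)).toReal ≤ Vr - sr := by
    intro H hSK
    have hfin : ∀ t : Set (Fin n → ℝ), t ⊆ hypercube H ε → volume t ≠ ⊤ := fun t ht =>
      ne_top_of_le_ne_top (hKtop H) (measure_mono ht)
    have hu : volume (A ∩ S) ≠ ⊤ :=
      hfin _ (Set.inter_subset_right.trans hSK)
    have hd : volume ((A ∩ hypercube H ε) \ S) ≠ ⊤ :=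
      hfin _ (Set.diff_subset.trans Set.inter_subset_right)
    have he : volume (hypercube H ε \ S) ≠ ⊤ := hfin _ Set.diff_subset
    constructor
    · rw [happly, ENNReal.toReal_mul, ENNReal.toReal_inv, hVtoReal H, inv_mul_eq_div,
        ← hsplitA H hSK, ENNReal.toReal_add hu hd]
    · have h1 : (volume ((A ∩ hypercube H ε) \ S)).toReal ≤ (volume (hypercube H ε \ S)).toReal :=
        ENNReal.toReal_mono he (measure_mono (Set.diff_subset_diff_left Set.inter_subset_right))
      have h2 : sr + (volume (hypercube H ε \ S)).toReal = Vr := by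
        rw [hsr, ← ENNReal.toReal_add hStop he, hsplitK H hSK, hVtoReal H]
      linarith
  obtain ⟨heq₀, hle₀⟩ := key H₀ Set.inter_subset_left
  obtain ⟨heq₁, hle₁⟩ := key H₁ Set.inter_subset_right
  rw [heq₀, heq₁]
  set ur : ℝ := (volume (A ∩ S)).toReal
  set d₀ : ℝ := (volume ((A ∩ hypercube H₀ ε) \ S)).toReal with hd₀
  set d₁ : ℝ := (volume ((A ∩ hypercube H₁ ε) \ S)).toReal with hd₁
  have hd₀0 : 0 ≤ d₀ := ENNReal.toReal_nonneg
  have hd₁0 : 0 ≤ d₁ := ENNReal.toReal_nonneg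
  have habs : |(ur + d₀) / Vr - (ur + d₁) / Vr| ≤ (Vr - sr) / Vr := by
    rw [div_sub_div_same]
    have : ur + d₀ - (ur + d₁) = d₀ - d₁ := by ring
    rw [this, abs_div, abs_of_pos hVrpos]
    gcongr
    exact abs_le.2 ⟨by linarith, by linarith⟩
  refine habs.trans ?_
  have hfrac : (1 - c) ^ n ≤ sr / Vr := by
    rw [← hceq, div_pow, hVr]
    gcongr
  rw [sub_div, div_self hVrpos.ne']
  linarith
end

section
/- Let H⁰ and H¹ be vectors in ℝⁿ with max_i |H⁰_i − H¹_i| ≤ δ/n, where 0 ≤ δ < 2·ε_res·n and ε_res > 0. Let B be uniformly distributed on {0,1}, and conditionally on B = b let the observation Y be uniformly distributed on the hypercube H(H^B, ε_res) in ℝⁿ. Then every measurable test ψ : ℝⁿ → {0,1} has probability of error P(ψ(Y) ≠ B) ≥ (1/2)·(1 − δ/(2·ε_res·n))ⁿ. -/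
open MeasureTheory
open scoped ENNReal

/-!
The test errs when `Y ∈ {ψ = true}` under `B = false` or `Y ∈ {ψ = false}` under `B = true`.
Both uniform laws have the same density `(2 εres)⁻ⁿ` on the overlap of the two cubes, and the two
events together cover that overlap, so the error is at least half the overlap's share of a cube.
Coordinatewise the overlap is an interval of length `2 εres - |H⁰ᵢ - H¹ᵢ| ≥ 2 εres - δ / n`.
-/

open scoped ProbabilityTheory

lemma measure_inter_div_le_cond_add_cond_compl {Ω : Type*} [MeasurableSpace Ω] {μ : Measure Ω}
    {s t : Set Ω} (hs : MeasurableSet s) (ht : MeasurableSet t) (hst : μ s = μ t) (A : Set Ω) :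
    μ (s ∩ t) / μ s ≤ μ[A|s] + μ[Aᶜ|t] := by
  have hcover : μ (s ∩ t) ≤ μ (s ∩ A) + μ (t ∩ Aᶜ) := by
    refine (measure_mono fun x hx => ?_).trans (measure_union_le _ _)
    by_cases hxA : x ∈ A
    exacts [Or.inl ⟨hx.1, hxA⟩, Or.inr ⟨hx.2, hxA⟩]
  rw [ProbabilityTheory.cond_apply hs, ProbabilityTheory.cond_apply ht, ← hst, ← mul_add,
    ENNReal.div_eq_inv_mul]
  gcongr

lemma dirac_prod_add_dirac_prod_apply_setOf_ne {α : Type*} [MeasurableSpace α]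
    (P₀ P₁ : Measure α) [SFinite P₀] [SFinite P₁] (c₀ c₁ : ℝ≥0∞) (ψ : α → Bool) :
    (c₀ • (Measure.dirac false).prod P₀ + c₁ • (Measure.dirac true).prod P₁)
        {p | ψ p.2 ≠ p.1} = c₀ * P₀ {y | ψ y = true} + c₁ * P₁ {y | ψ y = true}ᶜ := by
  simp only [Measure.add_apply, Measure.smul_apply, smul_eq_mul, Measure.dirac_prod,
    (measurableEmbedding_prodMk_left _).map_apply]
  congr 3
  ext y
  simp

theorem uniformOn_eq_cond {α : Type*} [MeasureSpace α] (s : Set α) :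
    uniformOn s = volume[|s] := rfl

instance isFiniteMeasure_uniformOn {α : Type*} [MeasureSpace α] (s : Set α) :
    IsFiniteMeasure (uniformOn s) :=
  inferInstanceAs (IsFiniteMeasure volume[|s])

section Hypercube

variable {n : ℕ}

theorem hypercube_eq_pi (H : Fin n → ℝ) (r : ℝ) :
    hypercube H r = Set.univ.pi fun i => Set.Icc (H i - r) (H i + r) := by
  ext x
  rw [Set.mem_univ_pi]
  exact forall_congr' fun i => by rw [abs_sub_comm]; exact Set.mem_Icc_iff_abs_le

theorem measurableSet_hypercube (H : Fin n → ℝ) (r : ℝ) : MeasurableSet (hypercube H r) := by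
  rw [hypercube_eq_pi]
  exact MeasurableSet.univ_pi fun _ => measurableSet_Icc

theorem volume_hypercube (H : Fin n → ℝ) (r : ℝ) :
    volume (hypercube H r) = ENNReal.ofReal (2 * r) ^ n := by
  simp only [hypercube_eq_pi, volume_pi_pi, Real.volume_Icc, add_sub_sub_cancel, ← two_mul,
    Finset.prod_const, Finset.card_univ, Fintype.card_fin]

theorem ofReal_sub_pow_le_volume_hypercube_inter {H₀ H₁ : Fin n → ℝ} {r d : ℝ}
    (hd : ∀ i, |H₀ i - H₁ i| ≤ d) :
    ENNReal.ofReal (2 * r - d) ^ n ≤ volume (hypercube H₀ r ∩ hypercube H₁ r) := by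
  rw [hypercube_eq_pi, hypercube_eq_pi, ← Set.pi_inter_distrib, volume_pi_pi]
  simp_rw [Set.Icc_inter_Icc, Real.volume_Icc, min_add_add_right, max_sub_sub_right]
  calc ENNReal.ofReal (2 * r - d) ^ n = ∏ _i : Fin n, ENNReal.ofReal (2 * r - d) := by simp
    _ ≤ _ := Finset.prod_le_prod' fun i _ => ENNReal.ofReal_le_ofReal <| by
      linarith [max_sub_min_eq_abs' (H₀ i) (H₁ i), hd i]

theorem ofReal_one_sub_div_pow_le_volume_hypercube_inter_div {H₀ H₁ : Fin n → ℝ} {r d : ℝ}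
    (hr : 0 < r) (hd₀ : d ≤ 2 * r) (hd : ∀ i, |H₀ i - H₁ i| ≤ d) :
    ENNReal.ofReal ((1 - d / (2 * r)) ^ n) ≤
      volume (hypercube H₀ r ∩ hypercube H₁ r) / volume (hypercube H₀ r) := by
  rw [volume_hypercube, ← ENNReal.ofReal_pow (by positivity), one_sub_div (by positivity),
    div_pow, ENNReal.ofReal_div_of_pos (by positivity), ENNReal.ofReal_pow (sub_nonneg.2 hd₀)]
  gcongr
  exact ofReal_sub_pow_le_volume_hypercube_inter hd

end Hypercube

theorem stmt6_general {n : ℕ} (H₀ H₁ : Fin n → ℝ) (δ εres : ℝ) (hε : 0 < εres)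
    (hδε : δ < 2 * εres * n) (hclose : ∀ i, |H₀ i - H₁ i| ≤ δ / n)
    (μ : Measure (Bool × (Fin n → ℝ)))
    (hμ : μ = ((1 : ℝ≥0∞) / 2) • ((Measure.dirac false).prod (uniformOn (hypercube H₀ εres)))
            + ((1 : ℝ≥0∞) / 2) • ((Measure.dirac true).prod (uniformOn (hypercube H₁ εres))))
    (ψ : (Fin n → ℝ) → Bool) :
    (1 / 2 : ℝ) * (1 - δ / (2 * εres * n)) ^ n ≤ (μ {p | ψ p.2 ≠ p.1}).toReal := by
  set A := {y | ψ y = true}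
  have hδn : δ / n ≤ 2 * εres := by
    rcases n.eq_zero_or_pos with rfl | hn
    · simpa using hε.le
    · rw [div_le_iff₀ (by positivity)]
      exact hδε.le
  have hbound : ENNReal.ofReal ((1 - δ / (2 * εres * n)) ^ n) ≤
      uniformOn (hypercube H₀ εres) A + uniformOn (hypercube H₁ εres) Aᶜ := by
    rw [mul_comm _ (n : ℝ), ← div_div]
    refine (ofReal_one_sub_div_pow_le_volume_hypercube_inter_div hε hδn hclose).trans ?_
    rw [uniformOn_eq_cond, uniformOn_eq_cond]
    exact measure_inter_div_le_cond_add_cond_compl (measurableSet_hypercube _ _)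
      (measurableSet_hypercube _ _) (by rw [volume_hypercube, volume_hypercube]) A
  rw [hμ, dirac_prod_add_dirac_prod_apply_setOf_ne, ← mul_add]
  refine (ENNReal.ofReal_le_iff_le_toReal (by finiteness)).1 ?_
  rw [ENNReal.ofReal_mul (by norm_num), ENNReal.ofReal_div_of_pos two_pos, ENNReal.ofReal_one,
    ENNReal.ofReal_ofNat]
  gcongr

/-- Let `H⁰, H¹ ∈ ℝⁿ` with `max_i |H⁰_i − H¹_i| ≤ δ/n`, `0 ≤ δ < 2 ε_res n`,
`ε_res > 0`.  Let `B` be uniform on `{0,1}` and, conditionally on `B = b`, let `Y` be uniform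
on the hypercube `H(H^b, ε_res)`; i.e. the joint law of `(B, Y)` is
`(1/2)·(δ_false ⊗ Unif(H(H⁰,ε_res))) + (1/2)·(δ_true ⊗ Unif(H(H¹,ε_res)))`.
Then every measurable test `ψ : ℝⁿ → Bool` has error probability at least
`(1/2)(1 − δ/(2 ε_res n))ⁿ`. -/
theorem stmt6 {n : ℕ} (H₀ H₁ : Fin n → ℝ) (δ εres : ℝ) (hδ : 0 ≤ δ) (hε : 0 < εres)
    (hδε : δ < 2 * εres * n) (hclose : ∀ i, |H₀ i - H₁ i| ≤ δ / n)
    (μ : Measure (Bool × (Fin n → ℝ)))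
    (hμ : μ = ((1 : ℝ≥0∞) / 2) • ((Measure.dirac false).prod (uniformOn (hypercube H₀ εres)))
            + ((1 : ℝ≥0∞) / 2) • ((Measure.dirac true).prod (uniformOn (hypercube H₁ εres))))
    (ψ : (Fin n → ℝ) → Bool) (hψ : Measurable ψ) :
    (1 / 2 : ℝ) * (1 - δ / (2 * εres * n)) ^ n ≤ (μ {p | ψ p.2 ≠ p.1}).toReal :=
  stmt6_general H₀ H₁ δ εres hε hδε hclose μ hμ ψ
end

section
/- Fix 0 < k₁ < 1, set k₂ = 1 − k₁, fix base parameters p₁*, p₂*, q* ∈ (0,1], and let τ ∈ ℝ be such that p₁ = p₁* + τ/k₁, p₂ = p₂* + τ·k₁/k₂², and q = q* − τ/k₂ all lie in [0,1]. Define the step graphon W_τ : [0,1]² → [0,1] by W_τ(x,y) = p₁ if x < k₁ and y < k₁; W_τ(x,y) = p₂ if x ≥ k₁ and y ≥ k₁; and W_τ(x,y) = q otherwise. Then the degree function d_{W_τ}(x) = ∫₀¹ W_τ(x,y) dy equals d_{W₀}(x) for every x ∈ [0,1], and the total degree D(W_τ) = ∫₀¹∫₀¹ W_τ(x,y) dx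 dy equals D(W₀). Consequently ∫₀¹ |d_{W_τ}(x)/D(W_τ) − d_{W₀}(x)/D(W₀)| dx = 0, i.e., W_τ and W₀ are a 0-exceptional pair of graphons. -/
open MeasureTheory intervalIntegral

/-- The two-block stochastic block model step graphon with blocks `[0,k₁)` and `[k₁,1]`,
within-block densities `p₁, p₂` and cross-block density `q`. -/
noncomputable def sbmW (k₁ p₁ p₂ q : ℝ) : ℝ → ℝ → ℝ := fun x y =>
  if x < k₁ ∧ y < k₁ then p₁ else if k₁ ≤ x ∧ k₁ ≤ y then p₂ else q

/-- Degree function of a graphon: `d_W(x) = ∫₀¹ W(x,y) dy`. -/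
noncomputable def degFn (W : ℝ → ℝ → ℝ) (x : ℝ) : ℝ := ∫ y in (0:ℝ)..1, W x y

/-- Total degree of a graphon: `D(W) = ∫₀¹ ∫₀¹ W(x,y) dx dy`. -/
noncomputable def totDeg (W : ℝ → ℝ → ℝ) : ℝ := ∫ x in (0:ℝ)..1, ∫ y in (0:ℝ)..1, W x y

lemma sbm_ii (a b c u v : ℝ) :
    IntervalIntegrable (fun y => if y < c then a else b) volume u v := by
  have hm : Measurable (fun y : ℝ => if y < c then a else b) :=
    Measurable.ite measurableSet_Iio measurable_const measurable_const
  apply (_root_.intervalIntegrable_const (c := max |a| |b|) (μ := volume) (a := u)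
    (b := v)).mono_fun hm.aestronglyMeasurable
  filter_upwards with y
  have ha : |a| ≤ ‖max |a| |b|‖ := (le_max_left _ _).trans (le_abs_self _)
  have hb : |b| ≤ ‖max |a| |b|‖ := (le_max_right _ _).trans (le_abs_self _)
  rw [Real.norm_eq_abs]
  by_cases h : y < c <;> simp only [h, if_true, if_false] <;> [exact ha; exact hb]

lemma sbm_step (a b c : ℝ) (h0 : 0 ≤ c) (h1 : c ≤ 1) :
    (∫ y in (0:ℝ)..1, (if y < c then a else b)) = c * a + (1 - c) * b := by
  have hsplit := intervalIntegral.integral_add_adjacent_intervals (a := 0) (b := c) (c := 1)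
    (sbm_ii a b c 0 c) (sbm_ii a b c c 1)
  rw [← hsplit]
  have h1' : (∫ y in (0:ℝ)..c, (if y < c then a else b)) = ∫ y in (0:ℝ)..c, a := by
    apply intervalIntegral.integral_congr_ae
    have hc : ∀ᵐ y : ℝ, y ≠ c := by
      rw [ae_iff]
      simpa using Real.volume_singleton (a := c)
    filter_upwards [hc] with y hy hmem
    rw [Set.uIoc_of_le h0] at hmem
    have : y < c := lt_of_le_of_ne hmem.2 hy
    simp [this]
  have h2' : (∫ y in c..(1:ℝ), (if y < c then a else b)) = ∫ y in c..(1:ℝ), b := by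
    apply intervalIntegral.integral_congr
    intro y hy
    rw [Set.uIcc_of_le h1] at hy
    simp [not_lt.mpr hy.1]
  rw [h1', h2']
  simp only [intervalIntegral.integral_const, smul_eq_mul]
  ring

lemma degFn_sbm (k₁ p₁ p₂ q : ℝ) (h0 : 0 ≤ k₁) (h1 : k₁ ≤ 1) (x : ℝ) :
    degFn (sbmW k₁ p₁ p₂ q) x =
      if x < k₁ then k₁ * p₁ + (1 - k₁) * q else k₁ * q + (1 - k₁) * p₂ := by
  by_cases hx : x < k₁
  · rw [if_pos hx]
    have e : ∀ y : ℝ, sbmW k₁ p₁ p₂ q x y = if y < k₁ then p₁ else q := by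
      intro y; simp [sbmW, hx, not_le.mpr hx]
    rw [show degFn (sbmW k₁ p₁ p₂ q) x = ∫ y in (0:ℝ)..1, (if y < k₁ then p₁ else q) from by
      unfold degFn; exact intervalIntegral.integral_congr fun y _ => e y]
    exact sbm_step p₁ q k₁ h0 h1
  · rw [if_neg hx]
    have e : ∀ y : ℝ, sbmW k₁ p₁ p₂ q x y = if y < k₁ then q else p₂ := by
      intro y
      simp only [sbmW, hx, false_and, if_false, not_lt.mp hx, true_and]
      by_cases hy : y < k₁ <;> simp [hy, not_le.mpr, not_lt.mp]
    rw [show degFn (sbmW k₁ p₁ p₂ q) x = ∫ y in (0:ℝ)..1, (if y < k₁ then q else p₂) from by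
      unfold degFn; exact intervalIntegral.integral_congr fun y _ => e y]
    exact sbm_step q p₂ k₁ h0 h1

lemma totDeg_sbm (k₁ p₁ p₂ q : ℝ) (h0 : 0 ≤ k₁) (h1 : k₁ ≤ 1) :
    totDeg (sbmW k₁ p₁ p₂ q) =
      k₁ * (k₁ * p₁ + (1 - k₁) * q) + (1 - k₁) * (k₁ * q + (1 - k₁) * p₂) := by
  have e : ∀ x : ℝ, (∫ y in (0:ℝ)..1, sbmW k₁ p₁ p₂ q x y)
      = if x < k₁ then k₁ * p₁ + (1 - k₁) * q else k₁ * q + (1 - k₁) * p₂ :=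
    fun x => degFn_sbm k₁ p₁ p₂ q h0 h1 x
  rw [show totDeg (sbmW k₁ p₁ p₂ q)
      = ∫ x in (0:ℝ)..1, (if x < k₁ then k₁ * p₁ + (1 - k₁) * q
          else k₁ * q + (1 - k₁) * p₂) from by
    unfold totDeg; exact intervalIntegral.integral_congr fun x _ => e x]
  exact sbm_step _ _ k₁ h0 h1

/-- For the one-parameter family of stochastic block models
`p₁ = p₁* + τ/k₁`, `p₂ = p₂* + τ k₁/k₂²`, `q = q* − τ/k₂` (with `k₂ = 1 − k₁`), the degree
function and the total degree of `W_τ` agree with those of `W₀`, and consequently `W_τ` and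
`W₀` are a `0`-exceptional pair (with the identity measure-preserving bijection). -/
theorem stmt10 (k₁ : ℝ) (hk₁ : 0 < k₁) (hk₁' : k₁ < 1)
    (p₁s p₂s qs : ℝ) (hp₁s : p₁s ∈ Set.Ioc (0:ℝ) 1) (hp₂s : p₂s ∈ Set.Ioc (0:ℝ) 1)
    (hqs : qs ∈ Set.Ioc (0:ℝ) 1) (τ : ℝ)
    (hp₁ : p₁s + τ / k₁ ∈ Set.Icc (0:ℝ) 1)
    (hp₂ : p₂s + τ * k₁ / (1 - k₁) ^ 2 ∈ Set.Icc (0:ℝ) 1)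
    (hq : qs - τ / (1 - k₁) ∈ Set.Icc (0:ℝ) 1) :
    (∀ x ∈ Set.Icc (0:ℝ) 1,
        degFn (sbmW k₁ (p₁s + τ / k₁) (p₂s + τ * k₁ / (1 - k₁) ^ 2) (qs - τ / (1 - k₁))) x
          = degFn (sbmW k₁ p₁s p₂s qs) x)
    ∧ totDeg (sbmW k₁ (p₁s + τ / k₁) (p₂s + τ * k₁ / (1 - k₁) ^ 2) (qs - τ / (1 - k₁)))
        = totDeg (sbmW k₁ p₁s p₂s qs)
    ∧ (∫ x in (0:ℝ)..1,
        |degFn (sbmW k₁ (p₁s + τ / k₁) (p₂s + τ * k₁ / (1 - k₁) ^ 2) (qs - τ / (1 - k₁))) x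
            / totDeg (sbmW k₁ (p₁s + τ / k₁) (p₂s + τ * k₁ / (1 - k₁) ^ 2) (qs - τ / (1 - k₁)))
          - degFn (sbmW k₁ p₁s p₂s qs) x / totDeg (sbmW k₁ p₁s p₂s qs)|) = 0 := by
  have h0 : (0:ℝ) ≤ k₁ := hk₁.le
  have h1 : k₁ ≤ 1 := hk₁'.le
  have hk₁0 : k₁ ≠ 0 := hk₁.ne'
  have hk₂0 : (1 : ℝ) - k₁ ≠ 0 := sub_ne_zero.mpr hk₁'.ne'
  have hdeg : ∀ x : ℝ,
      degFn (sbmW k₁ (p₁s + τ / k₁) (p₂s + τ * k₁ / (1 - k₁) ^ 2) (qs - τ / (1 - k₁))) x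
        = degFn (sbmW k₁ p₁s p₂s qs) x := by
    intro x
    rw [degFn_sbm _ _ _ _ h0 h1, degFn_sbm _ _ _ _ h0 h1]
    by_cases hx : x < k₁ <;> simp only [hx, if_true, if_false] <;> field_simp <;> ring
  have htot :
      totDeg (sbmW k₁ (p₁s + τ / k₁) (p₂s + τ * k₁ / (1 - k₁) ^ 2) (qs - τ / (1 - k₁)))
        = totDeg (sbmW k₁ p₁s p₂s qs) := by
    rw [totDeg_sbm _ _ _ _ h0 h1, totDeg_sbm _ _ _ _ h0 h1]
    field_simp
    ring
  refine ⟨fun x _ => hdeg x, htot, ?_⟩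
  have hzero : ∀ x : ℝ,
      |degFn (sbmW k₁ (p₁s + τ / k₁) (p₂s + τ * k₁ / (1 - k₁) ^ 2) (qs - τ / (1 - k₁))) x
          / totDeg (sbmW k₁ (p₁s + τ / k₁) (p₂s + τ * k₁ / (1 - k₁) ^ 2) (qs - τ / (1 - k₁)))
        - degFn (sbmW k₁ p₁s p₂s qs) x / totDeg (sbmW k₁ p₁s p₂s qs)| = 0 := by
    intro x
    rw [hdeg x, htot]
    simp
  simp_rw [hzero]
  simp
end
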